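/- arXiv:1003.4613 — 3 statements merged into one kernel-verified Lean document; each statement's English description precedes it below -/
import Mathlib

section
/- The thickened Farey set F_Q^ε = ⋃_{r ∈ F_{Q,θ} + ℤ^{d-1}} {x ∈ ℝ^{d-1} : ‖x - r‖ < ε e^{-dt}} equals ⋃_{a ∈ Ẑ^d} {x ∈ ℝ^{d-1} : a·n_+(x)Φ^{-t} ∈ C_ε}, where Q = e^{(d-1)t}. -/
open Matrix MeasureTheory Real Filter

noncomputable section

/-- Euclidean norm on `ℝ^m` (realized as `Fin m → ℝ`). -/
def eNorm {m : ℕ} (v : Fin m → ℝ) : ℝ := Real.sqrt (∑ i, (v i)^2)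

/-- A vector of integers is primitive if the gcd of its entries is 1. -/
def IsPrimitiveVec {m : ℕ} (v : Fin m → ℤ) : Prop := Finset.univ.gcd v = 1

/-- `n_+(x) = [[1_{n}, 0],[x, 1]]`. -/
def nPlus (n : ℕ) (x : Fin n → ℝ) : Matrix (Fin (n + 1)) (Fin (n + 1)) ℝ :=
  Matrix.of fun i j =>
    if (i : ℕ) < n then
      (if (j : ℕ) < n then (if (i : ℕ) = (j : ℕ) then 1 else 0) else 0)
    else (if hj : (j : ℕ) < n then x ⟨j, hj⟩ else 1)

/-- `Φ^t = diag(e^{-t},…,e^{-t}, e^{(d-1)t})` with `d - 1 = n` entries `e^{-t}`. -/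
def PhiMat (n : ℕ) (t : ℝ) : Matrix (Fin (n + 1)) (Fin (n + 1)) ℝ :=
  Matrix.diagonal fun i => if (i : ℕ) < n then Real.exp (-t) else Real.exp (n * t)

/-- `C_ε = {y ∈ ℝ^d : ‖(y_1,…,y_{d-1})‖ < ε y_d, θ < y_d ≤ 1}`, `d = n+1`. -/
def Cset (n : ℕ) (ε θ : ℝ) : Set (Fin (n + 1) → ℝ) :=
  {y | eNorm (fun i : Fin n => y i.castSucc) < ε * y (Fin.last n) ∧
    θ < y (Fin.last n) ∧ y (Fin.last n) ≤ 1}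

/-- The thickened Farey set: balls of radius `ε e^{-dt}` around the translates
`F_{Q,θ} + ℤ^{d-1}` of the Farey fractions `p/q ∈ [0,1)^{d-1}` with `θQ < q ≤ Q`. -/
def fareyThick (n : ℕ) (θ Q ε t : ℝ) : Set (Fin n → ℝ) :=
  {x | ∃ (p : Fin n → ℤ) (q : ℤ) (m : Fin n → ℤ),
    IsPrimitiveVec (Fin.snoc p q) ∧ θ * Q < (q : ℝ) ∧ (q : ℝ) ≤ Q ∧
    (∀ i, 0 ≤ (p i : ℝ) / (q : ℝ) ∧ (p i : ℝ) / (q : ℝ) < 1) ∧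
    eNorm (fun i => x i - ((p i : ℝ) / (q : ℝ) + (m i : ℝ))) < ε * Real.exp (-((n + 1) * t))}

/-!
Since `θ > 0`, membership in `C_ε` forces the last coordinate `q` of `a` to be positive, so
`a = (-(p + m q), q)` with `0 ≤ p < q` (Euclidean division of the first `d - 1` coordinates
of `a` by `q`). Then `a n_+(x) Φ^{-t} = (e^t q (x - (p/q + m)), q e^{-(d-1)t})`,
so the conditions defining `C_ε` say exactly that `θQ < q ≤ Q` and
`‖x - (p/q + m)‖ < ε e^{-dt}`; and the shear `(p, q) ↦ (-(p + m q), q)` preserves primitivity.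
-/

lemma eNorm_const_mul {m : ℕ} (c : ℝ) (v : Fin m → ℝ) :
    eNorm (fun i => c * v i) = |c| * eNorm v := by
  unfold eNorm
  simp only [mul_pow]
  rw [← Finset.mul_sum, Real.sqrt_mul (sq_nonneg c), Real.sqrt_sq_eq_abs]

lemma isPrimitiveVec_iff {m : ℕ} (v : Fin m → ℤ) :
    IsPrimitiveVec v ↔ ∀ c : ℤ, (∀ i, c ∣ v i) → IsUnit c := by
  refine ⟨fun h c hc => isUnit_of_dvd_one (h ▸ Finset.dvd_gcd fun i _ => hc i), fun h => ?_⟩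
  rw [IsPrimitiveVec, ← Finset.normalize_gcd, normalize_eq_one]
  exact h _ fun i => Finset.gcd_dvd (Finset.mem_univ i)

lemma isPrimitiveVec_snoc_neg_add_mul_iff {n : ℕ} (p m : Fin n → ℤ) (q : ℤ) :
    IsPrimitiveVec (Fin.snoc (fun i => -(p i + m i * q)) q : Fin (n + 1) → ℤ) ↔
      IsPrimitiveVec (Fin.snoc p q) := by
  have hdvd : ∀ c : ℤ, c ∣ q → ∀ i, (c ∣ -(p i + m i * q) ↔ c ∣ p i) := fun c hc i => by
    rw [dvd_neg, dvd_add_left (hc.mul_left _)]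
  simp only [isPrimitiveVec_iff, Fin.forall_fin_succ', Fin.snoc_castSucc, Fin.snoc_last]
  refine forall_congr' fun c => ?_
  constructor
  · rintro h ⟨hp, hq⟩
    exact h ⟨fun i => (hdvd c hq i).mpr (hp i), hq⟩
  · rintro h ⟨hp, hq⟩
    exact h ⟨fun i => (hdvd c hq i).mp (hp i), hq⟩

lemma exists_eq_neg_add_mul {n : ℕ} (a : Fin n → ℤ) {q : ℤ} (hq : 0 < q) :
    ∃ p m : Fin n → ℤ, (∀ i, 0 ≤ p i ∧ p i < q) ∧ a = fun i => -(p i + m i * q) := by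
  refine ⟨fun i => -a i % q, fun i => -a i / q,
    fun i => ⟨Int.emod_nonneg _ hq.ne', Int.emod_lt_of_pos _ hq⟩, funext fun i => ?_⟩
  have := Int.emod_add_ediv_mul (-a i) q
  dsimp only
  omega

lemma vecMul_nPlus {n : ℕ} (x : Fin n → ℝ) (v : Fin (n + 1) → ℝ) :
    vecMul v (nPlus n x) =
      Fin.snoc (fun j => v j.castSucc + v (Fin.last n) * x j) (v (Fin.last n)) := by
  funext j
  simp only [vecMul, dotProduct, nPlus, of_apply]
  rw [Fin.sum_univ_castSucc]
  refine Fin.lastCases ?_ (fun j => ?_) j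
  · simp
  · simp only [Fin.val_castSucc, Fin.is_lt, if_true, Fin.val_last, lt_irrefl, if_false,
      Fin.snoc_castSucc, Fin.eta, Fin.val_inj]
    simp

lemma vecMul_PhiMat {n : ℕ} (t : ℝ) (w : Fin (n + 1) → ℝ) :
    vecMul w (PhiMat n t) =
      Fin.snoc (fun j => w j.castSucc * exp (-t)) (w (Fin.last n) * exp (n * t)) := by
  funext j
  rw [PhiMat, vecMul_diagonal]
  refine Fin.lastCases ?_ (fun j => ?_) j <;> simp

lemma vecMul_nPlus_mul_PhiMat {n : ℕ} (t : ℝ) (x : Fin n → ℝ) (v : Fin (n + 1) → ℝ) :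
    vecMul v (nPlus n x * PhiMat n (-t)) =
      Fin.snoc (fun j => (v j.castSucc + v (Fin.last n) * x j) * exp t)
        (v (Fin.last n) * exp (-(n * t))) := by
  rw [← vecMul_vecMul, vecMul_nPlus, vecMul_PhiMat]
  simp only [Fin.snoc_castSucc, Fin.snoc_last, neg_neg, mul_neg]

lemma last_pos_of_vecMul_mem_Cset {n : ℕ} {t ε θ : ℝ} (hθ : 0 ≤ θ) {x : Fin n → ℝ}
    {v : Fin (n + 1) → ℝ} (hv : vecMul v (nPlus n x * PhiMat n (-t)) ∈ Cset n ε θ) :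
    0 < v (Fin.last n) := by
  have hlast := hv.2.1
  rw [vecMul_nPlus_mul_PhiMat, Fin.snoc_last] at hlast
  exact pos_of_mul_pos_left (hθ.trans_lt hlast) (exp_pos _).le

lemma snoc_vecMul_mem_Cset_iff {n : ℕ} {t ε θ q : ℝ} (hq : 0 < q) (x u : Fin n → ℝ) :
    vecMul (Fin.snoc u q) (nPlus n x * PhiMat n (-t)) ∈ Cset n ε θ ↔
      θ * exp (n * t) < q ∧ q ≤ exp (n * t) ∧
        eNorm (fun i => x i + u i / q) < ε * exp (-((n + 1) * t)) := by
  have hqt : 0 < q * exp t := mul_pos hq (exp_pos t)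
  have hnorm : eNorm (fun j => (u j + q * x j) * exp t) =
      q * exp t * eNorm (fun i => x i + u i / q) := by
    rw [← abs_of_pos hqt, ← eNorm_const_mul]
    congr 1
    funext i
    field_simp
    ring
  have hradius : q * exp t * (ε * exp (-((n + 1) * t))) = ε * (q * exp (-(n * t))) := by
    rw [mul_mul_mul_comm, ← exp_add, mul_left_comm]
    ring_nf
  have hlower : θ < q * exp (-(n * t)) ↔ θ * exp (n * t) < q := by
    rw [exp_neg, ← div_eq_mul_inv, lt_div_iff₀ (exp_pos _)]
  have hupper : q * exp (-(n * t)) ≤ 1 ↔ q ≤ exp (n * t) := by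
    rw [exp_neg, ← div_eq_mul_inv, div_le_one (exp_pos _)]
  simp only [Cset, Set.mem_ofPred_eq, vecMul_nPlus_mul_PhiMat, Fin.snoc_castSucc, Fin.snoc_last]
  rw [hnorm, ← hradius, mul_lt_mul_iff_right₀ hqt, hlower, hupper]
  tauto

lemma snoc_neg_add_mul_vecMul_mem_Cset_iff {n : ℕ} {t ε θ : ℝ} {p m : Fin n → ℤ} {q : ℤ}
    (hq : (0 : ℝ) < q) (x : Fin n → ℝ) :
    vecMul (fun i => ((Fin.snoc (fun i => -(p i + m i * q)) q : Fin (n + 1) → ℤ) i : ℝ))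
        (nPlus n x * PhiMat n (-t)) ∈ Cset n ε θ ↔
      θ * exp (n * t) < q ∧ q ≤ exp (n * t) ∧
        eNorm (fun i => x i - ((p i : ℝ) / q + m i)) < ε * exp (-((n + 1) * t)) := by
  have hcast : (fun i => ((Fin.snoc (fun i => -(p i + m i * q)) q : Fin (n + 1) → ℤ) i : ℝ)) =
      Fin.snoc (fun i => ((-(p i + m i * q) : ℤ) : ℝ)) (q : ℝ) :=
    Fin.comp_snoc (Int.cast : ℤ → ℝ) _ _
  rw [hcast, snoc_vecMul_mem_Cset_iff hq]
  have hshift : (fun i => x i + ((-(p i + m i * q) : ℤ) : ℝ) / q) =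
      fun i => x i - ((p i : ℝ) / q + m i) := by
    funext i
    push_cast
    field_simp
    ring
  rw [hshift]

theorem fareyThick_eq_union_general (n : ℕ) (t ε θ Q : ℝ)
    (hθ0 : 0 < θ) (hQ : Q = Real.exp (n * t)) :
    fareyThick n θ Q ε t =
      {x | ∃ a : Fin (n + 1) → ℤ, IsPrimitiveVec a ∧
        Matrix.vecMul (fun i => (a i : ℝ)) (nPlus n x * PhiMat n (-t)) ∈ Cset n ε θ} := by
  subst hQ
  ext x
  constructor
  · rintro ⟨p, q, m, hprim, hθq, hqQ, -, hdist⟩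
    have hq : (0 : ℝ) < q := (mul_pos hθ0 (exp_pos _)).trans hθq
    exact ⟨_, (isPrimitiveVec_snoc_neg_add_mul_iff p m q).mpr hprim,
      (snoc_neg_add_mul_vecMul_mem_Cset_iff hq x).mpr ⟨hθq, hqQ, hdist⟩⟩
  · rintro ⟨a, hprim, hmem⟩
    obtain ⟨a', q, rfl⟩ : ∃ a' q, a = Fin.snoc a' q := ⟨_, _, (Fin.snoc_init_self a).symm⟩
    have hq : (0 : ℝ) < q := by
      simpa using last_pos_of_vecMul_mem_Cset hθ0.le hmem
    obtain ⟨p, m, hpq, rfl⟩ := exists_eq_neg_add_mul a' (Int.cast_pos.mp hq)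
    obtain ⟨hθq, hqQ, hdist⟩ := (snoc_neg_add_mul_vecMul_mem_Cset_iff hq x).mp hmem
    refine ⟨p, q, m, (isPrimitiveVec_snoc_neg_add_mul_iff p m q).mp hprim, hθq, hqQ,
      fun i => ⟨div_nonneg (by exact_mod_cast (hpq i).1) hq.le, ?_⟩, hdist⟩
    exact (div_lt_one hq).mpr (by exact_mod_cast (hpq i).2)

/-- `F_Q^ε = ⋃_{a ∈ Ẑ^d} {x : a n_+(x) Φ^{-t} ∈ C_ε}` with `Q = e^{(d-1)t}`, `d = n+1`. -/
theorem fareyThick_eq_union (n : ℕ) (hn : 1 ≤ n) (t ε θ Q : ℝ) (ht : 0 < t) (hε : 0 < ε)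
    (hθ0 : 0 < θ) (hθ1 : θ < 1) (hQ : Q = Real.exp (n * t)) :
    fareyThick n θ Q ε t =
      {x | ∃ a : Fin (n + 1) → ℤ, IsPrimitiveVec a ∧
        Matrix.vecMul (fun i => (a i : ℝ)) (nPlus n x * PhiMat n (-t)) ∈ Cset n ε θ} :=
  fareyThick_eq_union_general n t ε θ Q hθ0 hQ
end
end

section
/- Let g : SL(d,ℝ) → ℝ be integrable and θ ∈ (0,1), ε > 0. With D(y_d) = diag(y_d^{-1/(d-1)},...,y_d^{-1/(d-1)}, y_d) and Φ^{-s} = diag(e^{s},...,e^{s},e^{-(d-1)s}), one has ∫_{C_ε} g(M D(y_d)) dy = (d-1)·vol(B₁^{d-1})·ε^{d-1} ∫_0^{|log θ|/(d-1)} g(M Φ^{-s}) e^{-d(d-1)s} ds for every M ∈ SL(d,ℝ). -/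
/-!
Write `y = (v, t)` with `t = y_d`. The integrand depends on `t` only, and the slice of `C_ε` at
height `t ∈ (θ, 1]` is the ball of radius `ε t` in `ℝ^{d-1}`, of volume `vol(B₁) (ε t)^{d-1}`; so
Fubini reduces the integral to `vol(B₁) ε^{d-1} ∫_θ^1 t^{d-1} g(M D(t)) dt`. The substitution
`t = e^{-(d-1)s}`, under which `D(t) = Φ^{-s}`, gives the right-hand side.
-/

open Matrix MeasureTheory Real Filter

noncomputable section

/-- `D(y_d) = diag(y_d^{-1/(d-1)},…,y_d^{-1/(d-1)}, y_d)`, `d = n+1`. -/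
def Dmat (n : ℕ) (yd : ℝ) : Matrix (Fin (n + 1)) (Fin (n + 1)) ℝ :=
  Matrix.diagonal fun i => if (i : ℕ) < n then yd ^ (-(1 : ℝ) / n) else yd

open Set

lemma eNorm_eq_norm_toLp {m : ℕ} (v : Fin m → ℝ) :
    eNorm v = ‖(WithLp.toLp 2 v : EuclideanSpace ℝ (Fin m))‖ := by
  simp [eNorm, EuclideanSpace.norm_eq]

lemma continuous_eNorm (m : ℕ) : Continuous (eNorm (m := m)) := by
  simpa only [funext eNorm_eq_norm_toLp] using (PiLp.continuous_toLp 2 _).norm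

lemma volume_setOf_eNorm_lt {m : ℕ} {r : ℝ} (hr : 0 < r) :
    volume {v : Fin m → ℝ | eNorm v < r} =
      ENNReal.ofReal (r ^ m) * volume (Metric.ball (0 : EuclideanSpace ℝ (Fin m)) 1) := by
  have hball : {v : Fin m → ℝ | eNorm v < r} =
      WithLp.toLp 2 ⁻¹' Metric.ball (0 : EuclideanSpace ℝ (Fin m)) r := by
    ext v
    simp [eNorm_eq_norm_toLp]
  rw [hball, (PiLp.volume_preserving_toLp (Fin m)).measure_preimage
    measurableSet_ball.nullMeasurableSet, Measure.addHaar_ball_of_pos _ _ hr,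
    finrank_euclideanSpace_fin]

def cone (n : ℕ) (ε : ℝ) (I : Set ℝ) : Set (ℝ × (Fin n → ℝ)) :=
  {p | p.1 ∈ I ∧ eNorm p.2 < ε * p.1}

lemma measurableSet_cone {n : ℕ} {ε : ℝ} {I : Set ℝ} (hI : MeasurableSet I) :
    MeasurableSet (cone n ε I) :=
  (measurable_fst hI).inter <| measurableSet_lt
    ((continuous_eNorm n).measurable.comp measurable_snd) (measurable_fst.const_mul ε)

lemma setIntegral_cone_comp_fst {n : ℕ} {ε : ℝ} {I : Set ℝ} (hε : 0 < ε)
    (hI : MeasurableSet I) (hI₀ : I ⊆ Ioi 0) {F : ℝ → ℝ}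
    (hF : IntegrableOn (fun p => F p.1) (cone n ε I)) :
    ∫ p in cone n ε I, F p.1 =
      (volume (Metric.ball (0 : EuclideanSpace ℝ (Fin n)) 1)).toReal * ε ^ n *
        ∫ t in I, t ^ n * F t := by
  set c := (volume (Metric.ball (0 : EuclideanSpace ℝ (Fin n)) 1)).toReal
  have hslice : ∀ t, ∫ v, (cone n ε I).indicator (fun p => F p.1) (t, v) =
      I.indicator (fun t => c * ε ^ n * (t ^ n * F t)) t := by
    intro t
    by_cases ht : t ∈ I
    · have hrad : 0 < ε * t := mul_pos hε (hI₀ ht)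
      have hsec : (fun v => (cone n ε I).indicator (fun p => F p.1) (t, v)) =
          {v : Fin n → ℝ | eNorm v < ε * t}.indicator fun _ => F t := by
        ext v
        by_cases hv : eNorm v < ε * t <;> simp [cone, ht, hv]
      rw [hsec, integral_indicator_const _
        (measurableSet_lt (continuous_eNorm n).measurable measurable_const), measureReal_def,
        volume_setOf_eNorm_lt hrad, ENNReal.toReal_mul, ENNReal.toReal_ofReal (by positivity),
        indicator_of_mem ht, smul_eq_mul, mul_pow]
      ring
    · simp [cone, ht]
  have hF' : Integrable ((cone n ε I).indicator fun p => F p.1)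
      ((volume : Measure ℝ).prod volume) :=
    (integrable_indicator_iff (measurableSet_cone hI)).2 hF
  rw [← integral_indicator (measurableSet_cone hI), Measure.volume_eq_prod, integral_prod _ hF']
  simp_rw [hslice]
  rw [integral_indicator hI, integral_const_mul]

lemma image_piFinSuccAbove_last_Cset (n : ℕ) (ε θ : ℝ) :
    MeasurableEquiv.piFinSuccAbove (fun _ => ℝ) (Fin.last n) '' Cset n ε θ =
      cone n ε (Ioc θ 1) := by
  ext p
  rw [MeasurableEquiv.image_eq_preimage_symm]
  simp [Cset, cone, MeasurableEquiv.piFinSuccAbove_symm_apply, Fin.insertNthEquiv_last,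
    Fin.snocEquiv, and_comm]

lemma setIntegral_Cset_comp_last (n : ℕ) (ε θ : ℝ) (F : ℝ → ℝ) :
    ∫ y in Cset n ε θ, F (y (Fin.last n)) = ∫ p in cone n ε (Ioc θ 1), F p.1 := by
  rw [← image_piFinSuccAbove_last_Cset]
  exact ((volume_preserving_piFinSuccAbove (fun _ => ℝ) (Fin.last n)).setIntegral_image_emb
    (MeasurableEquiv.measurableEmbedding _) (fun p => F p.1) _).symm

lemma integrableOn_cone_iff_Cset (n : ℕ) (ε θ : ℝ) (F : ℝ → ℝ) :
    IntegrableOn (fun p => F p.1) (cone n ε (Ioc θ 1)) ↔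
      IntegrableOn (fun y : Fin (n + 1) → ℝ => F (y (Fin.last n))) (Cset n ε θ) := by
  rw [← image_piFinSuccAbove_last_Cset]
  exact (volume_preserving_piFinSuccAbove (fun _ => ℝ) (Fin.last n)).integrableOn_image
    (MeasurableEquiv.measurableEmbedding _)

lemma image_exp_neg_mul_Ico {a : ℝ} (ha : 0 < a) (T : ℝ) :
    (fun s => exp (-(a * s))) '' Ico 0 T = Ioc (exp (-(a * T))) 1 := by
  ext t
  constructor
  · rintro ⟨s, ⟨hs₀, hsT⟩, rfl⟩
    exact ⟨exp_lt_exp.2 (by nlinarith), exp_le_one_iff.2 (by nlinarith)⟩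
  · rintro ⟨hTt, ht₁⟩
    have ht₀ : 0 < t := (exp_pos _).trans hTt
    refine ⟨-log t / a, ⟨div_nonneg (neg_nonneg.2 (log_nonpos ht₀.le ht₁)) ha.le, ?_⟩, ?_⟩
    · rwa [div_lt_iff₀ ha, neg_lt, ← exp_lt_exp, exp_log ht₀, mul_comm]
    · show exp (-(a * (-log t / a))) = t
      rw [mul_div_cancel₀ _ ha.ne', neg_neg, exp_log ht₀]

lemma setIntegral_Ioc_exp_neg_mul {a : ℝ} (ha : 0 < a) (T : ℝ) (G : ℝ → ℝ) :
    ∫ t in Ioc (exp (-(a * T))) 1, G t =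
      ∫ s in Ioc 0 T, a * exp (-(a * s)) * G (exp (-(a * s))) := by
  have hderiv : ∀ s ∈ Ico 0 T, HasDerivWithinAt (fun s => exp (-(a * s)))
      (exp (-(a * s)) * -a) (Ico 0 T) s := fun s _ => by
    simpa using (((hasDerivAt_id s).const_mul a).neg.exp).hasDerivWithinAt
  have hinj : InjOn (fun s => exp (-(a * s))) (Ico 0 T) := fun s _ s' _ h => by
    simpa [ha.ne'] using h
  rw [← image_exp_neg_mul_Ico ha, integral_image_eq_integral_abs_deriv_smul measurableSet_Ico
    hderiv hinj, integral_Ico_eq_integral_Ioo, ← integral_Ioc_eq_integral_Ioo]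
  simp [abs_of_pos ha, mul_comm]

lemma Dmat_exp_neg_mul (n : ℕ) (hn : n ≠ 0) (s : ℝ) :
    Dmat n (exp (-(n * s))) = PhiMat n (-s) := by
  unfold Dmat PhiMat
  congr 1
  ext i
  split_ifs
  · rw [← exp_mul]
    congr 1
    field_simp
  · ring_nf

theorem integral_Cset_eq_general (n : ℕ) (hn : 1 ≤ n) (ε θ : ℝ) (hε : 0 < ε) (hθ0 : 0 < θ)
    (hθ1 : θ < 1) (M : Matrix (Fin (n + 1)) (Fin (n + 1)) ℝ)
    (g : Matrix (Fin (n + 1)) (Fin (n + 1)) ℝ → ℝ)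
    (hg : IntegrableOn (fun y : Fin (n + 1) → ℝ => g (M * Dmat n (y (Fin.last n))))
      (Cset n ε θ) volume) :
    ∫ y in Cset n ε θ, g (M * Dmat n (y (Fin.last n))) =
      (n : ℝ) * (volume (Metric.ball (0 : EuclideanSpace ℝ (Fin n)) 1)).toReal * ε ^ n *
        ∫ s in Set.Ioc (0 : ℝ) (|Real.log θ| / n),
          g (M * PhiMat n (-s)) * Real.exp (-((n + 1) * n * s)) := by
  have hn₀ : (0 : ℝ) < n := by exact_mod_cast hn
  set T := |log θ| / n
  have hθ : exp (-(n * T)) = θ := by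
    rw [mul_div_cancel₀ _ hn₀.ne', abs_of_neg (log_neg hθ0 hθ1), neg_neg, exp_log hθ0]
  have hintegrand (s : ℝ) :
      n * exp (-(n * s)) * (exp (-(n * s)) ^ n * g (M * Dmat n (exp (-(n * s))))) =
        n * (g (M * PhiMat n (-s)) * exp (-((n + 1) * n * s))) := by
    have hexp : exp (-(n * s)) * exp (n * -(n * s)) = exp (-((n + 1) * n * s)) := by
      rw [← exp_add]
      ring_nf
    rw [Dmat_exp_neg_mul n (by omega), ← exp_nat_mul, ← hexp]
    ring
  rw [setIntegral_Cset_comp_last n ε θ fun t => g (M * Dmat n t),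
    setIntegral_cone_comp_fst (F := fun t => g (M * Dmat n t)) hε measurableSet_Ioc (fun t ht => hθ0.trans ht.1)
      ((integrableOn_cone_iff_Cset n ε θ fun t => g (M * Dmat n t)).2 hg),
    ← hθ, setIntegral_Ioc_exp_neg_mul hn₀]
  simp_rw [hintegrand, integral_const_mul]
  ring

/-- `∫_{C_ε} g(M D(y_d)) dy
  = (d-1) vol(B₁^{d-1}) ε^{d-1} ∫_0^{|log θ|/(d-1)} g(M Φ^{-s}) e^{-d(d-1)s} ds`, `d = n+1`. -/
theorem integral_Cset_eq (n : ℕ) (hn : 1 ≤ n) (ε θ : ℝ) (hε : 0 < ε) (hθ0 : 0 < θ)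
    (hθ1 : θ < 1) (M : Matrix (Fin (n + 1)) (Fin (n + 1)) ℝ) (hM : M.det = 1)
    (g : Matrix (Fin (n + 1)) (Fin (n + 1)) ℝ → ℝ)
    (hg : IntegrableOn (fun y : Fin (n + 1) → ℝ => g (M * Dmat n (y (Fin.last n))))
      (Cset n ε θ) volume) :
    ∫ y in Cset n ε θ, g (M * Dmat n (y (Fin.last n))) =
      (n : ℝ) * (volume (Metric.ball (0 : EuclideanSpace ℝ (Fin n)) 1)).toReal * ε ^ n *
        ∫ s in Set.Ioc (0 : ℝ) (|Real.log θ| / n),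
          g (M * PhiMat n (-s)) * Real.exp (-((n + 1) * n * s)) :=
  integral_Cset_eq_general n hn ε θ hε hθ0 hθ1 M g hg
end
end

section
/- Let A ∈ GL(d-1,ℝ) have at least one irrational entry. Then the lattice Γ_A = g_A · SL(d,ℤ) · g_A^{-1}, where g_A = [[Aᵀ, 0],[0,1]] ∈ GL(d,ℝ), is not commensurable with SL(d,ℤ) (i.e., Γ_A ∩ SL(d,ℤ) has infinite index in at least one of the two groups). -/
/-!
Let `i' = castSucc i` and `d = last n`. Since `g_A` fixes `e_d`, conjugating the integral
transvection `1 + m E_{i'd}` by `g_A` gives a matrix whose `(j, d)` entry is `m · A i j`, irrational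
for `m ≠ 0`. So `m ↦ g_A (1 + m E_{i'd}) g_A⁻¹` embeds the infinite group `ℤ` into `Γ_A` meeting
`SL(d,ℤ)` only in the identity, and `SL(d,ℤ) ∩ Γ_A` has infinite index in `Γ_A`.
-/

open Matrix

noncomputable section

/-- The block matrix `[[B, 0],[0, 1]]` of size `(n+1) × (n+1)` (here stated with a general
last column `b` above the `1`). -/
def blockMat (n : ℕ) (B : Matrix (Fin n) (Fin n) ℝ) (b : Fin n → ℝ) :
    Matrix (Fin (n + 1)) (Fin (n + 1)) ℝ :=
  Matrix.of fun i j =>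
    if hi : (i : ℕ) < n then
      (if hj : (j : ℕ) < n then B ⟨i, hi⟩ ⟨j, hj⟩ else b ⟨i, hi⟩)
    else (if (j : ℕ) < n then 0 else 1)

/-- `SL(d,ℤ)` as a subgroup of `GL(d,ℝ)`, `d = n+1`. -/
def slz (n : ℕ) : Subgroup (GL (Fin (n + 1)) ℝ) :=
  (Matrix.SpecialLinearGroup.toGL.comp
    (Matrix.SpecialLinearGroup.map (Int.castRingHom ℝ))).range

namespace Subgroup

theorem relIndex_eq_zero_of_comap_eq_bot {G M : Type*} [Group G] [Group M] [Infinite M]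
    {H K : Subgroup G} (f : M →* G) (hfK : f.range ≤ K) (hfH : H.comap f = ⊥) :
    H.relIndex K = 0 := by
  refine relIndex_eq_zero_of_le_right hfK ?_
  rw [← index_comap, hfH, index_bot, Nat.card_eq_zero_of_infinite]

end Subgroup

namespace Matrix

variable {ι R : Type*} [Fintype ι] [DecidableEq ι] [CommRing R]

theorem mul_apply_of_mulVec_single_eq {M N : Matrix ι ι R} {q : ι}
    (hN : N *ᵥ Pi.single q 1 = Pi.single q 1) (r : ι) : (M * N) r q = M r q := by
  rw [← col_apply (M * N), ← mulVec_single_one, ← mulVec_mulVec, hN, mulVec_single_one, col_apply]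

theorem GeneralLinearGroup.conj_apply_of_mulVec_single_eq {g : GL ι R} {q : ι}
    (hg : (g : Matrix ι ι R) *ᵥ Pi.single q 1 = Pi.single q 1) (h : GL ι R) (r : ι) :
    (MulAut.conj g h : Matrix ι ι R) r q = ((g : Matrix ι ι R) * h) r q := by
  have hg' : ((g⁻¹ : GL ι R) : Matrix ι ι R) *ᵥ Pi.single q 1 = Pi.single q 1 := by
    conv_lhs => rw [← hg]
    rw [mulVec_mulVec, ← Units.val_mul, inv_mul_cancel, Units.val_one, one_mulVec]
  rw [MulAut.conj_apply, Units.val_mul, mul_apply_of_mulVec_single_eq hg', Units.val_mul]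

def SpecialLinearGroup.transvectionHom {i j : ι} (hij : i ≠ j) :
    Multiplicative R →* SpecialLinearGroup ι R where
  toFun b := transvection hij b.toAdd
  map_one' := transvection_coeff_zero hij
  map_mul' b₁ b₂ := transvection_add hij b₁.toAdd b₂.toAdd

theorem SpecialLinearGroup.map_transvection {S : Type*} [CommRing S] (f : R →+* S) {i j : ι}
    (hij : i ≠ j) (b : R) : map f (transvection hij b) = transvection hij (f b) := by
  ext r s
  simp [transvection_coe, one_apply, single_apply, apply_ite f]

end Matrix

section blockMat

variable {n : ℕ} (B : Matrix (Fin n) (Fin n) ℝ)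

theorem blockMat_apply_castSucc_castSucc (b : Fin n → ℝ) (r c : Fin n) :
    blockMat n B b r.castSucc c.castSucc = B r c := by
  simp [blockMat]

theorem blockMat_apply_castSucc_last (b : Fin n → ℝ) (r : Fin n) :
    blockMat n B b r.castSucc (Fin.last n) = b r := by
  simp [blockMat]

theorem blockMat_zero_mulVec_single_last :
    blockMat n B 0 *ᵥ Pi.single (Fin.last n) 1 = Pi.single (Fin.last n) 1 := by
  ext r
  rw [mulVec_single_one, col_apply]
  cases r using Fin.lastCases with
  | last => simp [blockMat]
  | cast r => simp [blockMat_apply_castSucc_last, (Fin.castSucc_lt_last r).ne]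

end blockMat

theorem exists_intCast_eq_of_mem_slz {n : ℕ} {g : GL (Fin (n + 1)) ℝ} (hg : g ∈ slz n)
    (r s : Fin (n + 1)) : ∃ z : ℤ, (g : Matrix (Fin (n + 1)) (Fin (n + 1)) ℝ) r s = z := by
  obtain ⟨S, rfl⟩ := hg
  exact ⟨S r s, by simp⟩

theorem conj_blockMat_transvection_apply {n : ℕ} {B : Matrix (Fin n) (Fin n) ℝ}
    {g : GL (Fin (n + 1)) ℝ} (hg : (g : Matrix (Fin (n + 1)) (Fin (n + 1)) ℝ) = blockMat n B 0)
    {i : Fin n} (hne : i.castSucc ≠ Fin.last n) (c : ℝ) (j : Fin n) :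
    (MulAut.conj g (SpecialLinearGroup.toGL (SpecialLinearGroup.transvection hne c)) :
      Matrix (Fin (n + 1)) (Fin (n + 1)) ℝ) j.castSucc (Fin.last n) = c * B j i := by
  rw [GeneralLinearGroup.conj_apply_of_mulVec_single_eq (hg ▸ blockMat_zero_mulVec_single_last B),
    SpecialLinearGroup.coe_GL_coe_matrix, hg, SpecialLinearGroup.transvection_coe,
    ← transvection, mul_transvection_apply_same, blockMat_apply_castSucc_last,
    blockMat_apply_castSucc_castSucc, Pi.zero_apply, zero_add]

theorem gammaA_not_commensurable_general (n : ℕ)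
    (A : Matrix (Fin n) (Fin n) ℝ)
    (hirr : ∃ i j, Irrational (A i j))
    (gA : GL (Fin (n + 1)) ℝ)
    (hgA : (gA : Matrix (Fin (n + 1)) (Fin (n + 1)) ℝ) = blockMat n Aᵀ 0) :
    ¬ Subgroup.Commensurable (Subgroup.map (MulAut.conj gA).toMonoidHom (slz n)) (slz n) := by
  obtain ⟨i, j, hij⟩ := hirr
  have hne : i.castSucc ≠ Fin.last n := (Fin.castSucc_lt_last i).ne
  let ιℤ : SpecialLinearGroup (Fin (n + 1)) ℤ →* GL (Fin (n + 1)) ℝ :=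
    SpecialLinearGroup.toGL.comp (SpecialLinearGroup.map (Int.castRingHom ℝ))
  let f := (MulAut.conj gA).toMonoidHom.comp (ιℤ.comp (SpecialLinearGroup.transvectionHom hne))
  have hfΓ : f.range ≤ Subgroup.map (MulAut.conj gA).toMonoidHom (slz n) := by
    rintro _ ⟨m, rfl⟩
    exact Subgroup.mem_map_of_mem _ ⟨_, rfl⟩
  have hf : (slz n).comap f = ⊥ := by
    refine (Subgroup.eq_bot_iff_forall _).2 fun m hm => ?_
    obtain ⟨z, hz⟩ := exists_intCast_eq_of_mem_slz hm j.castSucc (Fin.last n)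
    have hentry : (z : ℝ) = m.toAdd * A i j := by
      rw [← hz]
      simpa [f, ιℤ, SpecialLinearGroup.transvectionHom, SpecialLinearGroup.map_transvection]
        using conj_blockMat_transvection_apply hgA hne (m.toAdd : ℝ) j
    by_contra hm1
    exact (hij.intCast_mul (toAdd_eq_zero.not.2 hm1)).ne_int z hentry.symm
  exact fun h => h.2 (Subgroup.relIndex_eq_zero_of_comap_eq_bot f hfΓ hf)

/-- If `A ∈ GL(d-1,ℝ)` has an irrational entry, then `Γ_A = g_A SL(d,ℤ) g_A^{-1}` with
`g_A = [[Aᵀ,0],[0,1]]` is not commensurable with `SL(d,ℤ)`. -/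
theorem gammaA_not_commensurable (n : ℕ) (hn : 1 ≤ n)
    (A : Matrix (Fin n) (Fin n) ℝ) (hA : IsUnit A.det)
    (hirr : ∃ i j, Irrational (A i j))
    (gA : GL (Fin (n + 1)) ℝ)
    (hgA : (gA : Matrix (Fin (n + 1)) (Fin (n + 1)) ℝ) = blockMat n Aᵀ 0) :
    ¬ Subgroup.Commensurable (Subgroup.map (MulAut.conj gA).toMonoidHom (slz n)) (slz n) :=
  gammaA_not_commensurable_general n A hirr gA hgA
end
end
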